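/- Let (X,τ) be a compact Hausdorff space and d a semi metric on X with τ_d weaker than τ. Let ρ be the semi metric on S(C(X,ℂ)) given by ρ(μ,ν) = sup{ |μ(a) − ν(a)| : a ∈ C(X,ℂ), |a(p) − a(q)| ≤ d(p,q) for all p,q ∈ X }. Then the topology induced by ρ on S(C(X,ℂ)) is weaker than the weak* topology: for every state ν and every ε > 0 there is a weak* open set U containing ν such that every state ν' ∈ U satisfies ρ(ν',ν) < ε. -/

import Mathlib

open scoped ENNReal

noncomputable section

variable {X : Type*} [TopologicalSpace X]

/-- A state on the C*-algebra `C(X, ℂ)`, viewed as an element of the weak* dual: a continuous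
linear functional sending the unit to `1` and taking nonnegative real values on positive
elements `star a * a`. -/
def IsState (φ : WeakDual ℂ C(X, ℂ)) : Prop :=
  φ 1 = 1 ∧ ∀ a : C(X, ℂ), 0 ≤ (φ (star a * a)).re ∧ (φ (star a * a)).im = 0

/-- The Monge–Kantorovich semi metric `ρ` on functionals on `C(X, ℂ)` associated with a semi
metric `d` on `X`: `ρ(μ, ν) = sup { |μ a - ν a| : a ∈ C(X, ℂ), |a p - a q| ≤ d p q ∀ p q }`,
with values in `[0, ∞]`. -/
def rho (d : X → X → ℝ) (μ ν : WeakDual ℂ C(X, ℂ)) : ℝ≥0∞ :=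
  ⨆ a ∈ {a : C(X, ℂ) | ∀ p q : X, ‖a p - a q‖ ≤ d p q}, (‖μ a - ν a‖₊ : ℝ≥0∞)

/-! Cover `X` by finitely many open sets `Vᵢ ∋ xᵢ` with `d xᵢ < ε / 16` on `Vᵢ` and take a
subordinate partition of unity `cᵢ`. Every `d`-Lipschitz `a` is then uniformly `ε / 16`-close to
`∑ a(xᵢ) cᵢ`, and states are uniformly bounded. Since states agree on `1 = ∑ cᵢ`, subtracting the
constant `a(x₀)` bounds `|ν' a - ν a|` by `ε / 2 + ∑ d(xᵢ, x₀) |ν' cᵢ - ν cᵢ|`, and the sum is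
small on a weak* neighbourhood of `ν` that does not depend on `a`. -/

open scoped ComplexOrder Topology
open Set

namespace IsState

variable {φ : WeakDual ℂ C(X, ℂ)}

lemma map_nonneg (hφ : IsState φ) {a : C(X, ℂ)} (ha : 0 ≤ a) : 0 ≤ φ a := by
  rw [StarOrderedRing.nonneg_iff] at ha
  induction ha using AddSubmonoid.closure_induction with
  | mem _ h =>
    obtain ⟨b, rfl⟩ := h
    exact Complex.nonneg_iff.2 ⟨(hφ.2 b).1, (hφ.2 b).2.symm⟩
  | zero => simp
  | add _ _ _ _ h₁ h₂ => rw [map_add]; exact add_nonneg h₁ h₂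

lemma nonempty (hφ : IsState φ) : Nonempty X := by
  by_contra hX
  rw [not_nonempty_iff] at hX
  simpa [Subsingleton.elim (1 : C(X, ℂ)) 0] using hφ.1

variable [CompactSpace X]

def toPositiveLinearMap (hφ : IsState φ) : C(X, ℂ) →ₚ[ℂ] ℂ :=
  .mk₀ (φ : C(X, ℂ) →L[ℂ] ℂ).toLinearMap fun _ => hφ.map_nonneg

lemma norm_apply_le (hφ : IsState φ) (a : C(X, ℂ)) : ‖φ a‖ ≤ 4 * ‖a‖ := by
  obtain ⟨b, hb_nonneg, hb_norm, hab⟩ := CStarAlgebra.exists_sum_four_nonneg a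
  have hb (i : Fin 4) : ‖φ (b i)‖ ≤ ‖a‖ := by
    have := hφ.toPositiveLinearMap.norm_apply_le_of_nonneg (b i) (hb_nonneg i)
    change ‖φ (b i)‖ ≤ ‖φ 1‖ * ‖b i‖ at this
    rw [hφ.1, norm_one, one_mul] at this
    exact this.trans (hb_norm i)
  calc ‖φ a‖ ≤ ∑ i : Fin 4, ‖φ (b i)‖ := by
        rw [hab, map_sum]
        refine (norm_sum_le _ _).trans_eq (Finset.sum_congr rfl fun i _ => ?_)
        simp
    _ ≤ ∑ _i : Fin 4, ‖a‖ := Finset.sum_le_sum fun i _ => hb i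
    _ = 4 * ‖a‖ := by simp

lemma norm_sub_apply_le {μ ν : WeakDual ℂ C(X, ℂ)} (hμ : IsState μ) (hν : IsState ν)
    {ι : Type*} [Fintype ι] (c : ι → C(X, ℂ)) (hc : ∑ i, c i = 1) (a : C(X, ℂ)) (z : ι → ℂ)
    (w : ℂ) :
    ‖μ a - ν a‖ ≤ 8 * ‖a - ∑ i, z i • c i‖ + ∑ i, ‖z i - w‖ * ‖μ (c i) - ν (c i)‖ := by
  set r := a - ∑ i, z i • c i
  have ha : a = r + ∑ i, (z i - w) • c i + w • 1 := by
    simp only [r, sub_smul, Finset.sum_sub_distrib, ← Finset.smul_sum, hc]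
    abel
  have hφa {φ : WeakDual ℂ C(X, ℂ)} (hφ : IsState φ) :
      φ a = φ r + ∑ i, (z i - w) * φ (c i) + w := by
    conv_lhs => rw [ha]
    simp [map_sum, hφ.1]
  have hdiff : μ a - ν a = (μ r - ν r) + ∑ i, (z i - w) * (μ (c i) - ν (c i)) := by
    simp only [hφa hμ, hφa hν, mul_sub, Finset.sum_sub_distrib]
    ring
  calc ‖μ a - ν a‖ ≤ (‖μ r‖ + ‖ν r‖) + ∑ i, ‖(z i - w) * (μ (c i) - ν (c i))‖ := by
        rw [hdiff]
        exact (norm_add_le _ _).trans (add_le_add (norm_sub_le _ _) (norm_sum_le _ _))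
    _ ≤ (4 * ‖r‖ + 4 * ‖r‖) + ∑ i, ‖z i - w‖ * ‖μ (c i) - ν (c i)‖ := by
        simp only [norm_mul]
        gcongr
        exacts [hμ.norm_apply_le r, hν.norm_apply_le r]
    _ = 8 * ‖r‖ + ∑ i, ‖z i - w‖ * ‖μ (c i) - ν (c i)‖ := by ring

end IsState

lemma exists_partitionOfUnity_forall_lt [CompactSpace X] [T2Space X] {d : X → X → ℝ}
    (hd : ∀ x, ∀ δ > 0, ∀ᶠ y in 𝓝 x, d x y < δ) {δ : ℝ} (hδ : 0 < δ) :
    ∃ (s : Finset X) (ρ : PartitionOfUnity s X univ), ∀ i x, ρ i x ≠ 0 → d i x < δ := by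
  choose V hV hVo hxV using fun x => eventually_nhds_iff.1 (hd x δ hδ)
  obtain ⟨s, hs⟩ := isCompact_univ.elim_finite_subcover V hVo fun x _ => mem_iUnion.2 ⟨x, hxV x⟩
  obtain ⟨ρ, hρ⟩ := PartitionOfUnity.exists_isSubordinate isClosed_univ (fun i : s => V i)
    (fun i => hVo i) fun x _ => by simpa using hs (mem_univ x)
  exact ⟨s, ρ, fun i x hx => hV i x (hρ i (subset_tsupport _ hx))⟩

namespace PartitionOfUnity

variable {ι : Type*} [Fintype ι] (ρ : PartitionOfUnity ι X univ)

lemma sum_realToRCLike : ∑ i, (ρ i).realToRCLike ℂ = 1 := by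
  ext x
  have hx := ρ.sum_eq_one (mem_univ x)
  rw [finsum_eq_sum_of_fintype] at hx
  simp [← Complex.ofReal_sum, hx]

lemma norm_sub_sum_smul_realToRCLike_le [CompactSpace X] (p : ι → X) (a : C(X, ℂ)) {δ : ℝ}
    (hδ : 0 ≤ δ) (h : ∀ i x, ρ i x ≠ 0 → ‖a (p i) - a x‖ ≤ δ) :
    ‖a - ∑ i, a (p i) • (ρ i).realToRCLike ℂ‖ ≤ δ := by
  refine (ContinuousMap.norm_le _ hδ).2 fun x => ?_
  have hmem : ∑ᶠ i, ρ i x • a (p i) ∈ Metric.closedBall (a x) δ :=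
    ρ.finsum_smul_mem_convex (g := fun i _ => a (p i)) (mem_univ x)
      (fun i hi => by simpa [dist_eq_norm] using h i x hi) (convex_closedBall _ _)
  rw [finsum_eq_sum_of_fintype, Metric.mem_closedBall, dist_eq_norm'] at hmem
  simpa [Complex.real_smul, mul_comm] using hmem

end PartitionOfUnity

lemma rho_le_ofReal {d : X → X → ℝ} {μ ν : WeakDual ℂ C(X, ℂ)} {r : ℝ}
    (h : ∀ a : C(X, ℂ), (∀ p q, ‖a p - a q‖ ≤ d p q) → ‖μ a - ν a‖ ≤ r) :
    rho d μ ν ≤ ENNReal.ofReal r :=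
  iSup₂_le fun a ha => by
    rw [← ENNReal.ofReal_coe_nnreal, coe_nnnorm]
    exact ENNReal.ofReal_le_ofReal (h a ha)

theorem rho_topology_weaker_than_weakstar_general [CompactSpace X] [T2Space X] (d : X → X → ℝ)
    (hweaker : ∀ (x : X) (ε : ℝ), 0 < ε →
      ∃ U : Set X, IsOpen U ∧ x ∈ U ∧ ∀ y ∈ U, d x y < ε) :
    ∀ ν : WeakDual ℂ C(X, ℂ), IsState ν → ∀ ε : ℝ, 0 < ε →
      ∃ U : Set (WeakDual ℂ C(X, ℂ)), IsOpen U ∧ ν ∈ U ∧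
        ∀ ν' ∈ U, IsState ν' → rho d ν' ν < ENNReal.ofReal ε := by
  intro ν hν ε hε
  obtain ⟨x₀⟩ := hν.nonempty
  have hd : ∀ x, ∀ δ > 0, ∀ᶠ y in 𝓝 x, d x y < δ := fun x δ hδ =>
    let ⟨U, hUo, hxU, hU⟩ := hweaker x δ hδ
    Filter.mem_of_superset (hUo.mem_nhds hxU) hU
  obtain ⟨s, ρ, hρ⟩ := exists_partitionOfUnity_forall_lt hd (by positivity : 0 < ε / 16)
  set c := fun i => (ρ i).realToRCLike ℂ
  set W := fun ν' : WeakDual ℂ C(X, ℂ) => ∑ i : s, d i x₀ * ‖ν' (c i) - ν (c i)‖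
  have hW : Continuous W := continuous_finsetSum _ fun i _ =>
    continuous_const.mul ((WeakDual.eval_continuous (c i)).sub continuous_const).norm
  refine ⟨{ν' | W ν' < ε / 4}, isOpen_lt hW continuous_const, by simpa [W] using by positivity,
    fun ν' hν'U hν' => ?_⟩
  refine (rho_le_ofReal fun a ha => ?_).trans_lt
    ((ENNReal.ofReal_lt_ofReal_iff hε).2 (by linarith : 3 * ε / 4 < ε))
  calc ‖ν' a - ν a‖
      ≤ 8 * ‖a - ∑ i : s, a i • c i‖ + ∑ i : s, ‖a i - a x₀‖ * ‖ν' (c i) - ν (c i)‖ :=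
        hν'.norm_sub_apply_le hν c ρ.sum_realToRCLike a (fun i => a i) (a x₀)
    _ ≤ 8 * (ε / 16) + ∑ i : s, d i x₀ * ‖ν' (c i) - ν (c i)‖ := by
        gcongr with i
        · exact ρ.norm_sub_sum_smul_realToRCLike_le _ a (by positivity)
            fun i x hx => (ha i x).trans (hρ i x hx).le
        · exact ha i x₀
    _ ≤ 3 * ε / 4 := by linarith [show W ν' < ε / 4 from hν'U]

/-- Let `(X, τ)` be compact Hausdorff and `d` a semi metric on `X` whose
induced topology is weaker than `τ`, and let `ρ` be the induced Monge–Kantorovich semi metric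
on the state space of `C(X, ℂ)`.  Then the topology induced by `ρ` on the state space is
weaker than the weak* topology: for every state `ν` and `ε > 0` there is a weak* open set `U`
containing `ν` such that every state `ν' ∈ U` satisfies `ρ(ν', ν) < ε`. -/
theorem rho_topology_weaker_than_weakstar [CompactSpace X] [T2Space X] (d : X → X → ℝ)
    (d_nonneg : ∀ x y, 0 ≤ d x y)
    (d_refl : ∀ x, d x x = 0)
    (d_symm : ∀ x y, d x y = d y x)
    (d_triangle : ∀ x y z, d x z ≤ d x y + d y z)
    (hweaker : ∀ (x : X) (ε : ℝ), 0 < ε →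
      ∃ U : Set X, IsOpen U ∧ x ∈ U ∧ ∀ y ∈ U, d x y < ε) :
    ∀ ν : WeakDual ℂ C(X, ℂ), IsState ν → ∀ ε : ℝ, 0 < ε →
      ∃ U : Set (WeakDual ℂ C(X, ℂ)), IsOpen U ∧ ν ∈ U ∧
        ∀ ν' ∈ U, IsState ν' → rho d ν' ν < ENNReal.ofReal ε :=
  rho_topology_weaker_than_weakstar_general d hweaker
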